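/- Let $\pi = (\pi_1, \ldots, \pi_\ell)$ be an overpartition in $\overline{\mathcal{B}}(\alpha_1,\ldots,\alpha_\lambda;\eta,k,r)$, and let $\{\pi_{c+l}\}_{0 \leq l \leq k-2}$ and $\{\pi_{d+l}\}_{0 \leq l \leq k-2}$ be two $(k-1)$-bands of $\pi$ with $c < d \leq c+k-2$ (i.e., they overlap). Then the two bands have the same parity; that is, $[|\pi_c|/\eta] + \cdots + [|\pi_{c+k-2}|/\eta] + \overline{V}_\pi(\pi_c) + \overline{O}_\pi(\pi_{c+k-2}) \equiv [|\pi_d|/\eta] + \cdots + [|\pi_{d+k-2}|/\eta] + \overline{V}_\pi(\pi_d) + \overline{O}_\pi(\pi_{d+k-2}) \pmod{2}$. -/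

import Mathlib

/-- A part of an overpartition: a size together with a flag telling
whether the part is overlined. -/
structure OPart where
  size : ℕ
  overlined : Bool
deriving DecidableEq

/-- The value of a part in the ordering `1̄ < 1 < 2̄ < 2 < ⋯`:
an overlined part of size `t` has value `2t - 1`, a non-overlined one `2t`. -/
def OPart.val (p : OPart) : ℕ := 2 * p.size - (if p.overlined then 1 else 0)

def dpart : OPart := ⟨0, false⟩

/-- value of the `i`-th part (0-based). -/
def pval (π : List OPart) (i : ℕ) : ℕ := (π.getD i dpart).val

def pover (π : List OPart) (i : ℕ) : Bool := (π.getD i dpart).overlined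

def psize (π : List OPart) (i : ℕ) : ℕ := (π.getD i dpart).size

/-- the weight `|π|`: the sum of the sizes of the parts. -/
def wt (π : List OPart) : ℕ := (π.map OPart.size).sum

/-- An overpartition: a sequence of positive parts, non-increasing in the
ordering `1̄ < 1 < 2̄ < 2 < ⋯`, in which each size is overlined at most once
(the overlined copy, being smallest among equal sizes, is the last occurrence). -/
def IsOverPartition (π : List OPart) : Prop :=
  List.Pairwise (fun p q : OPart => q.val ≤ p.val) π ∧
  (∀ p ∈ π, 0 < p.size) ∧
  (∀ t : ℕ, π.count (⟨t, true⟩ : OPart) ≤ 1)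

/-- `{π_{i+l}}_{0 ≤ l ≤ m-1}` is an `m`-band of `π`:
`π_i ≤ π_{i+m-1} + η`, with strict inequality if `π_i` is overlined. -/
def IsBand (η : ℕ) (π : List OPart) (m i : ℕ) : Prop :=
  i + m ≤ π.length ∧
  pval π i ≤ pval π (i + m - 1) + 2 * η ∧
  (pover π i = true → pval π i < pval π (i + m - 1) + 2 * η)

/-- `V̄_π(N)`: the number of overlined parts of value at most `N`
whose size is not divisible by `η`. -/
def Vbar (η : ℕ) (π : List OPart) (N : ℕ) : ℕ :=
  π.countP (fun p => p.overlined && decide (p.val ≤ N) && !(decide (p.size % η = 0)))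

/-- `Ō_π(N)`: the number of overlined parts of value at least `N`
whose size is divisible by `η`. -/
def Obar (η : ℕ) (π : List OPart) (N : ℕ) : ℕ :=
  π.countP (fun p => p.overlined && decide (N ≤ p.val) && decide (p.size % η = 0))

/-- `f_{≤η}(π)`: the number of parts not exceeding `η`. -/
def fLe (η : ℕ) (π : List OPart) : ℕ :=
  π.countP (fun p => decide (p.val ≤ 2 * η))

/-- `[|π_i|/η] + ⋯ + [|π_{i+m-1}|/η]`. -/
def bandSum (η : ℕ) (π : List OPart) (i m : ℕ) : ℕ :=
  ∑ l ∈ Finset.range m, psize π (i + l) / η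

/-- Every part is congruent to `0, α_1, …, α_λ` modulo `η`. -/
def CongParts (α : ℕ → ℕ) (lam η : ℕ) (π : List OPart) : Prop :=
  ∀ p ∈ π, p.size % η = 0 ∨ ∃ s, 1 ≤ s ∧ s ≤ lam ∧ p.size % η = α s

/-- The class `B̄(α_1,…,α_λ; η, k, r)`: conditions (1)–(4) of the definition
of `B̄₀`. -/
def InBbar (α : ℕ → ℕ) (lam η k r : ℕ) (π : List OPart) : Prop :=
  IsOverPartition π ∧
  CongParts α lam η π ∧
  (∀ p ∈ π, p.overlined = false → η ∣ p.size) ∧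
  (∀ i, i + k ≤ π.length →
    pval π (i + k - 1) + 2 * η ≤ pval π i ∧
    (pover π i = false → pval π (i + k - 1) + 2 * η < pval π i)) ∧
  fLe η π ≤ r

/-- An `m`-band at `i` is even:
`[|π_i|/η]+⋯+[|π_{i+m-1}|/η] ≡ r - 1 + V̄_π(π_i) + Ō_π(π_{i+m-1}) (mod 2)`. -/
def EvenBand (η r : ℕ) (π : List OPart) (m i : ℕ) : Prop :=
  Int.ModEq 2 (bandSum η π i m)
    ((r : ℤ) - 1 + (Vbar η π (pval π i) : ℤ) + (Obar η π (pval π (i + m - 1)) : ℤ))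

/-- Condition (5) of the definition of `B̄₀`. -/
def Cond5 (η k r : ℕ) (π : List OPart) : Prop :=
  fLe η π = r → (⟨η, true⟩ : OPart) ∉ π →
    ∃ i, IsBand η π (k - 1) i ∧ pval π i < 2 * (2 * η) - 1

/-- The class `B̄₀(α_1,…,α_λ; η, k, r)`: conditions (1)–(6). -/
def InB0 (α : ℕ → ℕ) (lam η k r : ℕ) (π : List OPart) : Prop :=
  InBbar α lam η k r π ∧ Cond5 η k r π ∧
  ∀ i, IsBand η π (k - 1) i → EvenBand η r π (k - 1) i

/-- `s(π) > t̄η`: every overlined part divisible by `η` has size `> tη`. -/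
def SGt (η t : ℕ) (π : List OPart) : Prop :=
  ∀ p ∈ π, p.overlined = true → η ∣ p.size → t * η < p.size

/-- `s(π) = t̄η`. -/
def SEq (η t : ℕ) (π : List OPart) : Prop :=
  (⟨t * η, true⟩ : OPart) ∈ π ∧
  ∀ p ∈ π, p.overlined = true → η ∣ p.size → t * η ≤ p.size

/-- `g(π) ≥ x` (value `x`): every part starting a `(k-1)`-band has value `≥ x`. -/
def GGe (η k : ℕ) (π : List OPart) (x : ℕ) : Prop :=
  ∀ i, IsBand η π (k - 1) i → x ≤ pval π i

/-- `g(π) < x`: some part starting a `(k-1)`-band has value `< x`. -/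
def GLt (η k : ℕ) (π : List OPart) (x : ℕ) : Prop :=
  ∃ i, IsBand η π (k - 1) i ∧ pval π i < x

/-- `π ∈ B̄₀^=(α_1,…,α_λ; η,k,r | t)`. -/
def InBeq (α : ℕ → ℕ) (lam η k r t : ℕ) (π : List OPart) : Prop :=
  InB0 α lam η k r π ∧
  ((SEq η t π ∧ GGe η k π (2 * (t * η) - 1)) ∨
   (SGt η t π ∧ GGe η k π (2 * (t * η)) ∧ GLt η k π (2 * ((t + 1) * η) - 1)))

/-- `π ∈ B̄₀^>(α_1,…,α_λ; η,k,r | t)`. -/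
def InBgt (α : ℕ → ℕ) (lam η k r t : ℕ) (π : List OPart) : Prop :=
  InB0 α lam η k r π ∧ SGt η t π ∧ GGe η k π (2 * ((t + 1) * η) - 1)

/-- An `m`-band belonging to the closed interval `[(t-1)η, (t+1)η]`. -/
def BandInC (η t : ℕ) (π : List OPart) (m i : ℕ) : Prop :=
  IsBand η π m i ∧ 2 * ((t - 1) * η) ≤ pval π (i + m - 1) ∧
  pval π i ≤ 2 * ((t + 1) * η)

/-- An `m`-band belonging to `[(t-1)η, \overline{(t+1)η})`. -/
def BandInO (η t : ℕ) (π : List OPart) (m i : ℕ) : Prop :=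
  IsBand η π m i ∧ 2 * ((t - 1) * η) ≤ pval π (i + m - 1) ∧
  pval π i < 2 * ((t + 1) * η) - 1

/-- An `m`-band at `i` is of type N. -/
def TypeN (η r t : ℕ) (π : List OPart) (m i : ℕ) : Prop :=
  Int.ModEq 2 (bandSum η π i m)
    ((t : ℤ) + (r : ℤ) - 1 + (Vbar η π (pval π i) : ℤ) +
      (Obar η π (pval π (i + m - 1)) : ℤ))

/-- `π` is obtained from `μ` by inserting the part `p`. -/
def InsertPart (μ : List OPart) (p : OPart) (π : List OPart) : Prop :=
  ∃ l1 l2, μ = l1 ++ l2 ∧ π = l1 ++ p :: l2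

/-- The `(k-1)`-reduction `D_t` as a relation: `μ = D_t(π)`. -/
def DtRel (η t : ℕ) (π μ : List OPart) : Prop :=
  ((⟨t * η, true⟩ : OPart) ∈ π ∧ InsertPart μ ⟨t * η, true⟩ π) ∨
  ((⟨t * η, true⟩ : OPart) ∉ π ∧ InsertPart μ ⟨t * η, false⟩ π)

/-- `μ` has a `(k-2)`-band belonging to `[(t-1)η, \overline{(t+1)η})` of type N. -/
def HasTypeNBand (η r k t : ℕ) (μ : List OPart) : Prop :=
  ∃ i, BandInO η t μ (k - 2) i ∧ TypeN η r t μ (k - 2) i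

/-- The `(k-1)`-augmentation `C_t` as a relation: `π = C_t(μ)`. -/
def CtRel (η r k t : ℕ) (μ π : List OPart) : Prop :=
  (HasTypeNBand η r k t μ ∧ InsertPart μ ⟨t * η, false⟩ π) ∨
  (¬ HasTypeNBand η r k t μ ∧ InsertPart μ ⟨t * η, true⟩ π)

/-- `B₁`-type overpartitions: conditions (1)–(4), no overlined part divisible
by `η`, and at most `r - 1` parts not exceeding `η`. -/
def InB1over (α : ℕ → ℕ) (lam η k r : ℕ) (π : List OPart) : Prop :=
  InBbar α lam η k r π ∧ (∀ p ∈ π, p.overlined = true → ¬ η ∣ p.size) ∧ fLe η π < r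

/-- `D_η`: partitions into distinct parts divisible by `η`. -/
def InD (η : ℕ) (τ : List ℕ) : Prop :=
  List.Pairwise (· > ·) τ ∧ ∀ x ∈ τ, 0 < x ∧ η ∣ x

/-- Bressoud's class `B₁(α_1,…,α_λ; η,k,r)` of ordinary partitions. -/
def InB1nat (α : ℕ → ℕ) (lam η k r : ℕ) (σ : List ℕ) : Prop :=
  List.Pairwise (· ≥ ·) σ ∧ (∀ x ∈ σ, 0 < x) ∧
  (∀ x ∈ σ, x % η = 0 ∨ ∃ s, 1 ≤ s ∧ s ≤ lam ∧ x % η = α s) ∧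
  (∀ x : ℕ, ¬ η ∣ x → σ.count x ≤ 1) ∧
  (∀ i, i + k ≤ σ.length →
    σ.getD (i + k - 1) 0 + η ≤ σ.getD i 0 ∧
    (η ∣ σ.getD i 0 → σ.getD (i + k - 1) 0 + η < σ.getD i 0)) ∧
  σ.countP (fun x => decide (x ≤ η)) < r

/-- The class `Ā₀(α_1,…,α_λ; η,k,r)`. Congruence conditions involving `η/2`
are stated with sizes doubled. -/
def InA0 (α : ℕ → ℕ) (lam η k r : ℕ) (π : List OPart) : Prop :=
  IsOverPartition π ∧
  CongParts α lam η π ∧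
  (Even lam →
    ∀ p ∈ π, p.overlined = false →
      η ∣ p.size ∧
      ¬ (2 * η * (2 * k - lam - 1) ∣ 2 * p.size) ∧
      2 * p.size % (2 * η * (2 * k - lam - 1)) ≠ η * (2 * r - lam) ∧
      2 * p.size % (2 * η * (2 * k - lam - 1)) ≠
        2 * η * (2 * k - lam - 1) - η * (2 * r - lam)) ∧
  (¬ Even lam →
    (∀ p ∈ π, p.overlined = false →
      η ∣ 2 * p.size ∧
      p.size % (2 * η) ≠ η ∧
      ¬ (2 * η * (2 * k - lam - 1) ∣ 2 * p.size) ∧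
      2 * p.size % (2 * η * (2 * k - lam - 1)) ≠ η * (2 * r - lam) ∧
      2 * p.size % (2 * η * (2 * k - lam - 1)) ≠
        2 * η * (2 * k - lam - 1) - η * (2 * r - lam)) ∧
    (∀ p ∈ π, p.overlined = true → 2 * p.size % (2 * η) ≠ η))


/-!
Overlined parts have pairwise distinct values, so `V̄_π(π_c) - V̄_π(π_d)` counts the overlined
non-multiples of `η` among `π_c, …, π_{d-1}`, and `Ō_π(π_{d+k-2}) - Ō_π(π_{c+k-2})` the overlined
multiples of `η` among `π_{c+k-1}, …, π_{d+k-2}`. The two sides therefore differ by the sum over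
`c ≤ j < d` of `([π_{j+k-1}/η] + [π_{j+k-1} overlined, η ∣ π_{j+k-1}])`
`- ([π_j/η] + [π_j overlined, η ∤ π_j])`, and each of these terms is even.

Indeed, the difference condition and the two bands give `η ≤ π_j - π_{j+k-1} ≤ 2η`, which fixes
the parity except when `π_j` and `π_{j+k-1}` are both overlined and a multiple `M` of `η` lies in
`[π_{j+k-1} + η, π_j)`. Then each of the `k - 1` parts
`π_c, …, π_j, π_d, …, π_{c+k-2}, π_{j+k}, …, π_{d+k-2}` is overlined with size in one of the blocks
`(M, M + η)`, `(M - η, M)`, `(M - 2η, M - η)`, and the residues mod `η` met in the three blocks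
fill disjoint ranges. So these parts have distinct nonzero residues, all among `α_1, …, α_λ`,
contradicting `λ < k - 1`.
-/

lemma mod_eq_sub_of_dvd {η B s : ℕ} (hB : η ∣ B) (h₁ : B ≤ s) (h₂ : s < B + η) :
    s % η = s - B := by
  obtain ⟨u, rfl⟩ := hB
  conv_lhs => rw [← Nat.add_sub_cancel' h₁, Nat.mul_add_mod]
  exact Nat.mod_eq_of_lt (by omega)

lemma dvd_mul_add_iff_eq_zero {η c : ℕ} (Z : ℕ) (hc : c < η) : η ∣ η * Z + c ↔ c = 0 := by
  rw [Nat.dvd_add_right (dvd_mul_right η Z)]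
  exact ⟨fun h => Nat.eq_zero_of_dvd_of_lt h hc, fun h => h ▸ dvd_zero η⟩

lemma two_mul_le_of_dvd_of_lt {η M : ℕ} (hM : η ∣ M) (h : η < M) : 2 * η ≤ M := by
  obtain ⟨u, rfl⟩ := hM
  have := Nat.lt_of_mul_lt_mul_left (a := η) (b := 1) (c := u) (by omega)
  nlinarith

lemma getD_mem_of_lt {α : Type*} {l : List α} {j : ℕ} (d : α) (hj : j < l.length) :
    l.getD j d ∈ l := by
  rw [List.getD_eq_getElem _ _ hj]
  exact List.getElem_mem hj

lemma countP_eq_sum_range {α : Type*} (f : α → Bool) (l : List α) (d : α) :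
    l.countP f = ∑ j ∈ Finset.range l.length, if f (l.getD j d) then 1 else 0 := by
  induction l with
  | nil => simp
  | cons a l ih =>
    rw [List.countP_cons, List.length_cons, Finset.sum_range_succ']
    simp only [List.getD_cons_succ, List.getD_cons_zero, ih]

namespace OPart

def vbarInd (η : ℕ) (p : OPart) : ℕ := if p.overlined ∧ p.size % η ≠ 0 then 1 else 0

def obarInd (η : ℕ) (p : OPart) : ℕ := if p.overlined ∧ p.size % η = 0 then 1 else 0

/-- The one configuration not covered by `size_div_add_vbarInd_modEq`. -/
def IsBadPair (η : ℕ) (p q : OPart) : Prop :=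
  p.overlined ∧ q.overlined ∧ ∃ M, η ∣ M ∧ q.size + η ≤ M ∧ M < p.size

theorem size_div_add_vbarInd_modEq {η : ℕ} {p q : OPart} (hη : 0 < η) (hq : 0 < q.size)
    (hpη : p.overlined = false → η ∣ p.size) (hqη : q.overlined = false → η ∣ q.size)
    (hgap : q.val + 2 * η ≤ p.val) (hgap' : p.overlined = false → q.val + 2 * η < p.val)
    (hnear : p.val ≤ q.val + 4 * η) (hnear' : p.overlined = true → p.val < q.val + 4 * η)
    (hgood : ¬ p.IsBadPair η q) :
    p.size / η + p.vbarInd η ≡ q.size / η + q.obarInd η [MOD 2] := by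
  obtain ⟨x, op⟩ := p
  obtain ⟨y, oq⟩ := q
  obtain ⟨X, a, ha, rfl⟩ : ∃ X a, a < η ∧ x = η * X + a :=
    ⟨x / η, x % η, Nat.mod_lt _ hη, (Nat.div_add_mod x η).symm⟩
  obtain ⟨Y, b, hb, rfl⟩ : ∃ Y b, b < η ∧ y = η * Y + b :=
    ⟨y / η, y % η, Nat.mod_lt _ hη, (Nat.div_add_mod y η).symm⟩
  dsimp only at hq hpη hqη
  rw [dvd_mul_add_iff_eq_zero X ha] at hpη
  rw [dvd_mul_add_iff_eq_zero Y hb] at hqη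
  have hgood' : op = true → oq = true → η * Y + b + η ≤ η * X → a = 0 := fun h₁ h₂ h₃ => by
    by_contra ha0
    exact hgood ⟨h₁, h₂, η * X, dvd_mul_right η X, h₃, by dsimp only; omega⟩
  clear hgood
  simp only [vbarInd, obarInd, val, Nat.mul_add_div hη, Nat.div_eq_of_lt ha, Nat.div_eq_of_lt hb,
    Nat.mul_add_mod, Nat.mod_eq_of_lt ha, Nat.mod_eq_of_lt hb, add_zero] at hgap hgap' hnear hnear' ⊢
  have hXY : X = Y + 1 ∨ X = Y + 2 := by
    have h₁ : η * Y < η * X := by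
      cases op <;> cases oq <;> simp at hgap hgap' hpη hqη <;> omega
    have h₂ : η * X < η * (Y + 3) := by
      rw [mul_add]; cases op <;> cases oq <;> simp at hnear hnear' hpη hqη <;> omega
    have := Nat.lt_of_mul_lt_mul_left h₁
    have := Nat.lt_of_mul_lt_mul_left h₂
    omega
  rcases hXY with rfl | rfl <;> cases op <;> cases oq <;>
    simp only [mul_add, mul_one, Nat.ModEq, reduceIte, Bool.false_eq_true, Bool.true_eq_false,
      true_and, false_and, forall_const, IsEmpty.forall_iff]
      at hgap hgap' hnear hnear' hgood' hpη hqη ⊢ <;>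
    (try split_ifs) <;> omega

end OPart

section Parts

variable {π : List OPart} {η i j : ℕ}

lemma pval_add_one (hπ : IsOverPartition π) (hj : j < π.length) (ho : pover π j = true) :
    pval π j + 1 = 2 * psize π j := by
  have := hπ.2.1 _ (getD_mem_of_lt dpart hj)
  simp only [pover, pval, psize, OPart.val] at ho this ⊢
  simp only [ho, reduceIte]
  omega

lemma pval_of_pover_eq_false (ho : pover π j = false) : pval π j = 2 * psize π j := by
  unfold pover at ho
  unfold pval psize OPart.val
  rw [ho, if_neg Bool.false_ne_true, Nat.sub_zero]

lemma dvd_psize (hdvd : ∀ p ∈ π, p.overlined = false → η ∣ p.size) (hj : j < π.length)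
    (ho : pover π j = false) : η ∣ psize π j :=
  hdvd _ (getD_mem_of_lt dpart hj) ho

lemma pval_antitone (hπ : IsOverPartition π) (hij : i ≤ j) (hj : j < π.length) :
    pval π j ≤ pval π i := by
  rcases hij.eq_or_lt with rfl | hij
  · exact le_rfl
  · simp only [pval, List.getD_eq_getElem _ _ hj, List.getD_eq_getElem _ _ (hij.trans hj)]
    exact List.Pairwise.rel_get_of_lt hπ.1 (a := ⟨i, hij.trans hj⟩) (b := ⟨j, hj⟩) hij

lemma eq_of_pover_of_psize_eq (hπ : IsOverPartition π) (hi : i < π.length)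
    (hj : j < π.length) (hoi : pover π i = true) (hoj : pover π j = true)
    (h : psize π i = psize π j) : i = j := by
  by_contra hne
  have hgi : (⟨psize π i, true⟩ : OPart) = π.get ⟨i, hi⟩ := by
    simp only [pover, psize, List.getD_eq_getElem _ _ hi] at hoi ⊢
    simp [← hoi]
  have hgj : (⟨psize π i, true⟩ : OPart) = π.get ⟨j, hj⟩ := by
    simp only [pover, psize, List.getD_eq_getElem _ _ hj, List.getD_eq_getElem _ _ hi] at hoj h ⊢
    simp [h, ← hoj]
  have hdup : π.Duplicate ⟨psize π i, true⟩ := by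
    rcases Nat.lt_or_gt_of_ne hne with hij | hij
    · exact List.duplicate_iff_exists_distinct_get.2 ⟨_, _, hij, hgi, hgj⟩
    · exact List.duplicate_iff_exists_distinct_get.2 ⟨_, _, hij, hgj, hgi⟩
  have := List.duplicate_iff_two_le_count.1 hdup
  have := hπ.2.2 (psize π i)
  omega

lemma pval_lt_pval (hπ : IsOverPartition π) (hij : i < j) (hj : j < π.length)
    (ho : pover π i = true ∨ pover π j = true) : pval π j < pval π i := by
  have hi : i < π.length := hij.trans hj
  refine (pval_antitone hπ hij.le hj).lt_of_ne fun heq => hij.ne ?_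
  cases hoi : pover π i <;> cases hoj : pover π j
  · simp [hoi, hoj] at ho
  · have := pval_of_pover_eq_false hoi
    have := pval_add_one hπ hj hoj
    omega
  · have := pval_add_one hπ hi hoi
    have := pval_of_pover_eq_false hoj
    omega
  · refine eq_of_pover_of_psize_eq hπ hi hj hoi hoj ?_
    have := pval_add_one hπ hi hoi
    have := pval_add_one hπ hj hoj
    omega

lemma pval_le_pval_iff (hπ : IsOverPartition π) (hi : i < π.length) (hj : j < π.length)
    (ho : pover π i = true ∨ pover π j = true) : pval π i ≤ pval π j ↔ j ≤ i :=
  ⟨fun h => not_lt.1 fun hij => (pval_lt_pval hπ hij hj ho).not_ge h,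
    fun h => pval_antitone hπ h hi⟩

lemma pover_of_pval_mem_Ioo (hdvd : ∀ p ∈ π, p.overlined = false → η ∣ p.size)
    (hj : j < π.length) {B : ℕ} (hB : η ∣ B) (h₁ : 2 * B < pval π j)
    (h₂ : pval π j < 2 * (B + η)) : pover π j = true := by
  by_contra ho
  rw [Bool.not_eq_true] at ho
  have hval := pval_of_pover_eq_false ho
  obtain ⟨u, rfl⟩ := hB
  obtain ⟨v, hv⟩ := dvd_psize hdvd hj ho
  have := Nat.lt_of_mul_lt_mul_left (a := η) (b := u) (c := v) (by omega)
  have := Nat.lt_of_mul_lt_mul_left (a := η) (b := v) (c := u + 1) (by rw [mul_add]; omega)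
  omega

lemma pover_and_mod_of_pval_mem_Ioo (hπ : IsOverPartition π)
    (hdvd : ∀ p ∈ π, p.overlined = false → η ∣ p.size) (hj : j < π.length) {B : ℕ}
    (hB : η ∣ B) (h₁ : 2 * B < pval π j) (h₂ : pval π j + 1 < 2 * (B + η)) :
    pover π j = true ∧ pval π j + 1 = 2 * psize π j ∧ psize π j % η = psize π j - B := by
  have ho := pover_of_pval_mem_Ioo hdvd hj hB h₁ (by omega)
  have hv := pval_add_one hπ hj ho
  exact ⟨ho, hv, mod_eq_sub_of_dvd hB (s := psize π j) (by omega) (by omega)⟩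

lemma Vbar_pval_eq_sum (hπ : IsOverPartition π) {c : ℕ} (hc : c < π.length) :
    Vbar η π (pval π c) = ∑ j ∈ Finset.Ico c π.length, (π.getD j dpart).vbarInd η := by
  have hIco : Finset.Ico c π.length = (Finset.range π.length).filter (c ≤ ·) := by
    ext; simp only [Finset.mem_Ico, Finset.mem_filter, Finset.mem_range]; omega
  rw [Vbar, countP_eq_sum_range _ _ dpart, hIco, Finset.sum_filter]
  refine Finset.sum_congr rfl fun j hj => ?_
  change (if (pover π j && decide (pval π j ≤ pval π c) && !decide (psize π j % η = 0)) then 1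
    else 0) = if c ≤ j then (if pover π j = true ∧ psize π j % η ≠ 0 then 1 else 0) else 0
  cases ho : pover π j
  · simp
  · simp only [pval_le_pval_iff hπ (Finset.mem_range.1 hj) hc (Or.inl ho)]
    by_cases c ≤ j <;> simp [*]

lemma Obar_pval_eq_sum (hπ : IsOverPartition π) {c : ℕ} (hc : c < π.length) :
    Obar η π (pval π c) = ∑ j ∈ Finset.range (c + 1), (π.getD j dpart).obarInd η := by
  have hr : Finset.range (c + 1) = (Finset.range π.length).filter (· ≤ c) := by
    ext; simp only [Finset.mem_filter, Finset.mem_range]; omega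
  rw [Obar, countP_eq_sum_range _ _ dpart, hr, Finset.sum_filter]
  refine Finset.sum_congr rfl fun j hj => ?_
  change (if (pover π j && decide (pval π c ≤ pval π j) && decide (psize π j % η = 0)) then 1
    else 0) = if j ≤ c then (if pover π j = true ∧ psize π j % η = 0 then 1 else 0) else 0
  cases ho : pover π j
  · simp
  · simp only [pval_le_pval_iff hπ hc (Finset.mem_range.1 hj) (Or.inr ho)]
    by_cases j ≤ c <;> simp [*]

end Parts

lemma card_le_of_psize_eq_comp_mod {α : ℕ → ℕ} {lam η : ℕ} {π : List OPart}
    (hπ : IsOverPartition π) (hcong : CongParts α lam η π) {J : Finset ℕ} {F : ℕ → ℕ}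
    (hJ : ∀ e ∈ J, e < π.length ∧ pover π e = true ∧ psize π e % η ≠ 0 ∧
      psize π e = F (psize π e % η)) :
    J.card ≤ lam := by
  calc J.card ≤ ((Finset.Icc 1 lam).image α).card :=
        Finset.card_le_card_of_injOn (fun e => psize π e % η) ?_ ?_
    _ ≤ (Finset.Icc 1 lam).card := Finset.card_image_le
    _ = lam := by simp
  · intro e he
    obtain ⟨he, -, hne, -⟩ := hJ e he
    rcases hcong _ (getD_mem_of_lt dpart he) with h | ⟨s, hs₁, hs₂, hs⟩
    · exact absurd h hne
    · exact Finset.mem_image.2 ⟨s, Finset.mem_Icc.2 ⟨hs₁, hs₂⟩, hs.symm⟩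
  · intro e he e' he' hee'
    obtain ⟨he, ho, -, hF⟩ := hJ e he
    obtain ⟨he', ho', -, hF'⟩ := hJ e' he'
    exact eq_of_pover_of_psize_eq hπ he he' ho ho' (hF.trans ((congrArg F hee').trans hF'.symm))

lemma card_Icc_union_Icc_union_Ioc {c d j n : ℕ} (hj : c ≤ j) (hjd : j < d) (hdc : d ≤ c + n) :
    (Finset.Icc c j ∪ Finset.Icc d (c + n) ∪ Finset.Ioc (j + n + 1) (d + n)).card = n + 1 := by
  rw [Finset.card_union_of_disjoint, Finset.card_union_of_disjoint, Nat.card_Icc, Nat.card_Icc,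
    Nat.card_Ioc]
  · omega
  · rw [Finset.disjoint_left]
    intro x
    simp only [Finset.mem_Icc]
    omega
  · rw [Finset.disjoint_left]
    intro x
    simp only [Finset.mem_union, Finset.mem_Icc, Finset.mem_Ioc]
    omega

lemma bandSum_eq_sum_Ico (η : ℕ) (π : List OPart) (i m : ℕ) :
    bandSum η π i m = ∑ j ∈ Finset.Ico i (i + m), psize π j / η := by
  rw [bandSum, Finset.sum_Ico_eq_sum_range, Nat.add_sub_cancel_left]

lemma isBand_succ_iff {η n c : ℕ} {π : List OPart} :
    IsBand η π (n + 1) c ↔ c + n < π.length ∧ pval π c ≤ pval π (c + n) + 2 * η ∧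
      (pover π c = true → pval π c < pval π (c + n) + 2 * η) := by
  rw [IsBand, Nat.add_succ_sub_one]
  rfl

structure OverlappingBands (η : ℕ) (π : List OPart) (n c d : ℕ) : Prop where
  lt : c < d
  le : d ≤ c + n
  left : IsBand η π (n + 1) c
  right : IsBand η π (n + 1) d

namespace OverlappingBands

variable {π : List OPart} {η n c d j : ℕ}

theorem modEq_of_forall (hπ : IsOverPartition π) (hb : OverlappingBands η π n c d) {m : ℕ}
    (h : ∀ j ∈ Finset.Ico c d, psize π j / η + (π.getD j dpart).vbarInd η ≡
      psize π (j + (n + 1)) / η + (π.getD (j + (n + 1)) dpart).obarInd η [MOD m]) :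
    bandSum η π c (n + 1) + Vbar η π (pval π c) + Obar η π (pval π (c + n)) ≡
      bandSum η π d (n + 1) + Vbar η π (pval π d) + Obar η π (pval π (d + n)) [MOD m] := by
  obtain ⟨hcd, hdc, -, hd⟩ := hb
  have hdn := (isBand_succ_iff.1 hd).1
  have hV : Vbar η π (pval π c) =
      ∑ j ∈ Finset.Ico c d, (π.getD j dpart).vbarInd η + Vbar η π (pval π d) := by
    rw [Vbar_pval_eq_sum hπ (by omega), Vbar_pval_eq_sum hπ (by omega),
      Finset.sum_Ico_consecutive _ hcd.le (by omega)]
  have hO : Obar η π (pval π (d + n)) = Obar η π (pval π (c + n)) +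
      ∑ j ∈ Finset.Ico c d, (π.getD (j + (n + 1)) dpart).obarInd η := by
    rw [Obar_pval_eq_sum hπ hdn, Obar_pval_eq_sum hπ (by omega),
      Finset.sum_Ico_add' (fun j => (π.getD j dpart).obarInd η),
      ← Finset.sum_range_add_sum_Ico _ (show c + n + 1 ≤ d + n + 1 by omega)]
    rfl
  have hSc : bandSum η π c (n + 1) = ∑ j ∈ Finset.Ico c d, psize π j / η +
      ∑ j ∈ Finset.Ico d (c + (n + 1)), psize π j / η := by
    rw [bandSum_eq_sum_Ico, Finset.sum_Ico_consecutive _ hcd.le (by omega)]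
  have hSd : bandSum η π d (n + 1) = ∑ j ∈ Finset.Ico d (c + (n + 1)), psize π j / η +
      ∑ j ∈ Finset.Ico c d, psize π (j + (n + 1)) / η := by
    rw [bandSum_eq_sum_Ico, Finset.sum_Ico_add' (fun j => psize π j / η),
      Finset.sum_Ico_consecutive _ (by omega) (by omega)]
  have hsum := (Nat.ModEq.sum h).add_right (∑ j ∈ Finset.Ico d (c + (n + 1)), psize π j / η +
    Vbar η π (pval π d) + Obar η π (pval π (c + n)))
  rw [Finset.sum_add_distrib, Finset.sum_add_distrib] at hsum
  unfold Nat.ModEq at hsum ⊢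
  convert hsum using 2 <;> omega

theorem pval_le_add (hπ : IsOverPartition π) (hb : OverlappingBands η π n c d) (hj : c ≤ j)
    (hjd : j < d) :
    pval π j ≤ pval π (j + n + 1) + 4 * η ∧
      (pover π j = true → pval π j < pval π (j + n + 1) + 4 * η) := by
  obtain ⟨-, hdc, hc, hd⟩ := hb
  rw [isBand_succ_iff] at hc hd
  have h₁ := pval_antitone hπ hj (by omega : j < π.length)
  have h₂ := pval_antitone hπ hdc (by omega : c + n < π.length)
  have h₃ := pval_antitone hπ (by omega : j + n + 1 ≤ d + n) hd.1
  refine ⟨by omega, fun ho => ?_⟩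
  rcases hj.eq_or_lt with rfl | hj
  · have := hc.2.2 ho
    omega
  · have := pval_lt_pval hπ hj (by omega) (Or.inr ho)
    omega

theorem exists_of_isBadPair (hπ : IsOverPartition π)
    (hdvd : ∀ p ∈ π, p.overlined = false → η ∣ p.size) (hb : OverlappingBands η π n c d)
    (hj : c ≤ j) (hjd : j < d)
    (hbad : (π.getD j dpart).IsBadPair η (π.getD (j + n + 1) dpart)) :
    ∃ (J : Finset ℕ) (F : ℕ → ℕ), J.card = n + 1 ∧ ∀ e ∈ J, e < π.length ∧
      pover π e = true ∧ psize π e % η ≠ 0 ∧ psize π e = F (psize π e % η) := by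
  obtain ⟨hcd, hdc, hc, hd⟩ := hb
  rw [isBand_succ_iff] at hc hd
  obtain ⟨hoj, hoj', M, hM, hyM, hMx⟩ : pover π j = true ∧ pover π (j + n + 1) = true ∧
      ∃ M, η ∣ M ∧ psize π (j + n + 1) + η ≤ M ∧ M < psize π j := hbad
  have hlen : ∀ e ≤ d + n, e < π.length := fun e he => by omega
  have hvj := pval_add_one hπ (hlen j (by omega)) hoj
  have hvj' := pval_add_one hπ (hlen _ (by omega)) hoj'
  have h2η := two_mul_le_of_dvd_of_lt hM (by omega)
  have hB₁ : η ∣ M - η := Nat.dvd_sub hM dvd_rfl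
  have hB₂ : η ∣ M - 2 * η := Nat.dvd_sub hM (dvd_mul_left η 2)
  have hjc := pval_antitone hπ hj (hlen j (by omega))
  have hcnd := pval_antitone hπ hdc (hlen (c + n) (by omega))
  have hdnj := pval_antitone hπ (by omega : j + n + 1 ≤ d + n) hd.1
  have hod := pover_of_pval_mem_Ioo hdvd (hlen d (by omega)) hB₁ (by omega) (by omega)
  have hvd := pval_add_one hπ (hlen d (by omega)) hod
  have hoc := pover_of_pval_mem_Ioo hdvd (hlen c (by omega)) hM (by omega) (by omega)
  have hvc := pval_add_one hπ (hlen c (by omega)) hoc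
  have := hc.2.2 hoc
  have := hd.2.2 hod
  -- the sizes of `J` lie in `(M, M + η)`, `(M - η, M)`, `(M - 2η, M - η)`, the three groups
  -- separated by the sizes of `π_c` and `π_d`; `M + ρ` determines the group of residue `ρ`
  refine ⟨Finset.Icc c j ∪ Finset.Icc d (c + n) ∪ Finset.Ioc (j + n + 1) (d + n),
    fun ρ => if M + ρ ≤ psize π c then M + ρ
      else if M + ρ ≤ psize π d + η then M + ρ - η else M + ρ - 2 * η,
    card_Icc_union_Icc_union_Ioc hj hjd hdc, fun e he => ?_⟩
  simp only [Finset.mem_union, Finset.mem_Icc, Finset.mem_Ioc] at he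
  have he' := hlen e (by omega)
  rcases he with (he | he) | he
  · have h₁ := pval_antitone hπ he.1 he'
    have h₂ := pval_antitone hπ he.2 (hlen j (by omega))
    obtain ⟨ho, hv, hr⟩ := pover_and_mod_of_pval_mem_Ioo hπ hdvd he' hM (by omega) (by omega)
    exact ⟨he', ho, by omega, by simp only [hr]; split_ifs <;> omega⟩
  · have h₁ := pval_antitone hπ he.1 he'
    have h₂ := pval_antitone hπ he.2 (hlen (c + n) (by omega))
    obtain ⟨ho, hv, hr⟩ := pover_and_mod_of_pval_mem_Ioo hπ hdvd he' hB₁ (by omega) (by omega)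
    exact ⟨he', ho, by omega, by simp only [hr]; split_ifs <;> omega⟩
  · have h₁ := pval_antitone hπ he.2 hd.1
    have h₂ := pval_lt_pval hπ he.1 he' (Or.inl hoj')
    obtain ⟨ho, hv, hr⟩ := pover_and_mod_of_pval_mem_Ioo hπ hdvd he' hB₂ (by omega) (by omega)
    exact ⟨he', ho, by omega, by simp only [hr]; split_ifs <;> omega⟩

theorem size_div_add_vbarInd_modEq {α : ℕ → ℕ} {lam : ℕ} (hπ : IsOverPartition π)
    (hcong : CongParts α lam η π) (hdvd : ∀ p ∈ π, p.overlined = false → η ∣ p.size)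
    (hη : 0 < η) (hlam : lam ≤ n) (hb : OverlappingBands η π n c d) (hj : c ≤ j) (hjd : j < d)
    (hgap : pval π (j + n + 1) + 2 * η ≤ pval π j ∧
      (pover π j = false → pval π (j + n + 1) + 2 * η < pval π j)) :
    psize π j / η + (π.getD j dpart).vbarInd η ≡
      psize π (j + n + 1) / η + (π.getD (j + n + 1) dpart).obarInd η [MOD 2] := by
  have hlen : j + n + 1 < π.length := by
    have := (isBand_succ_iff.1 hb.right).1
    omega
  have hnear := hb.pval_le_add hπ hj hjd
  refine OPart.size_div_add_vbarInd_modEq hη (hπ.2.1 _ (getD_mem_of_lt dpart hlen))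
    (dvd_psize hdvd (by omega)) (dvd_psize hdvd hlen) hgap.1 hgap.2 hnear.1 hnear.2
    fun hbad => ?_
  obtain ⟨J, F, hJ, hF⟩ := hb.exists_of_isBadPair hπ hdvd hj hjd hbad
  have := card_le_of_psize_eq_comp_mod hπ hcong hF
  omega

end OverlappingBands

theorem stmt_4_general (α : ℕ → ℕ) (lam η k r : ℕ)
    (hη : 0 < η)
    (hlk : lam + 1 < k)
    (π : List OPart) (hπ : InBbar α lam η k r π)
    (c d : ℕ) (hcd : c < d) (hdc : d ≤ c + k - 2)
    (hc : IsBand η π (k - 1) c) (hd : IsBand η π (k - 1) d) :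
    Int.ModEq 2
      ((bandSum η π c (k - 1) : ℤ) + (Vbar η π (pval π c) : ℤ) +
        (Obar η π (pval π (c + (k - 1) - 1)) : ℤ))
      ((bandSum η π d (k - 1) : ℤ) + (Vbar η π (pval π d) : ℤ) +
        (Obar η π (pval π (d + (k - 1) - 1)) : ℤ)) := by
  obtain ⟨n, rfl⟩ : ∃ n, k = n + 2 := ⟨k - 2, by omega⟩
  obtain ⟨hop, hcong, hdvd, hgap, -⟩ := hπ
  have hb : OverlappingBands η π n c d := ⟨hcd, by omega, hc, hd⟩
  have hlen := (isBand_succ_iff.1 hd).1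
  have key := hb.modEq_of_forall hop (m := 2) fun j hj => by
    rw [Finset.mem_Ico] at hj
    exact hb.size_div_add_vbarInd_modEq hop hcong hdvd hη (by omega) hj.1 hj.2 (hgap j (by omega))
  exact_mod_cast Int.natCast_modEq_iff.2 key

theorem stmt_4 (α : ℕ → ℕ) (lam η k r : ℕ)
    (hη : 0 < η)
    (hαpos : ∀ i, 1 ≤ i → i ≤ lam → 0 < α i ∧ α i < η)
    (hαmono : ∀ i j, 1 ≤ i → i < j → j ≤ lam → α i < α j)
    (hαsym : ∀ i, 1 ≤ i → i ≤ lam → α i = η - α (lam + 1 - i))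
    (hrk : r < k) (hlr : lam ≤ r) (hlk : lam + 1 < k)
    (π : List OPart) (hπ : InBbar α lam η k r π)
    (c d : ℕ) (hcd : c < d) (hdc : d ≤ c + k - 2)
    (hc : IsBand η π (k - 1) c) (hd : IsBand η π (k - 1) d) :
    Int.ModEq 2
      ((bandSum η π c (k - 1) : ℤ) + (Vbar η π (pval π c) : ℤ) +
        (Obar η π (pval π (c + (k - 1) - 1)) : ℤ))
      ((bandSum η π d (k - 1) : ℤ) + (Vbar η π (pval π d) : ℤ) +
        (Obar η π (pval π (d + (k - 1) - 1)) : ℤ)) :=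
  stmt_4_general α lam η k r hη hlk π hπ c d hcd hdc hc hd
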